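/- Let r = p/q and r̃ = p̃/q̃ be rational functions in R_{m,n} with r nondegenerate, and with unit-norm coefficient vectors x(r), x(r̃) chosen with optimal relative phase so that ‖x(r)-x(r̃)‖ = d(r,r̃). Then for all z in the closed unit disk, χ(r(z), r̃(z)) ≤ √(2(m+n+1))·κ(S)·d(r,r̃), where S = S(q,-p). -/

import Mathlib

noncomputable section
open Matrix Finset Polynomial

/-- Spectral (operator `ℓ² → ℓ²`) norm of a complex matrix. -/
def specNorm {α β : Type} [Fintype α] [Fintype β] [DecidableEq α] [DecidableEq β]
    (A : Matrix α β ℂ) : ℝ :=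
  ‖(Matrix.toEuclideanLin A).toContinuousLinearMap‖

/-- Moore–Penrose pseudoinverse `A† = Aᴴ (A Aᴴ)⁻¹` of a full row rank matrix. -/
def pinv {α β : Type} [Fintype α] [Fintype β] [DecidableEq α] [DecidableEq β]
    (A : Matrix α β ℂ) : Matrix β α ℂ :=
  Aᴴ * (A * Aᴴ)⁻¹

/-- Sylvester-like matrix `S = S(q,-p)` of size `(m+n+1) × (m+n+2)`: for `0 ≤ k ≤ m` the
`(j,k)` entry is `q_{j-k}`, and for `0 ≤ k ≤ n` the `(j, m+1+k)` entry is `-p_{j-k}`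
(coefficients out of range being `0`). -/
def sylv (m n : ℕ) (p q : Polynomial ℂ) : Matrix (Fin (m + n + 1)) (Fin (m + n + 2)) ℂ :=
  fun j k =>
    if (k : ℕ) ≤ m then
      (if (k : ℕ) ≤ (j : ℕ) then q.coeff ((j : ℕ) - (k : ℕ)) else 0)
    else
      (if (k : ℕ) - (m + 1) ≤ (j : ℕ) then -p.coeff ((j : ℕ) - ((k : ℕ) - (m + 1))) else 0)

/-- Spectral condition number `κ(S) = ‖S‖·‖S†‖` of the Sylvester-like matrix. -/
def condS (m n : ℕ) (p q : Polynomial ℂ) : ℝ :=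
  specNorm (sylv m n p q) * specNorm (pinv (sylv m n p q))

/-- Squared Euclidean norm of the stacked coefficient vector of `p/q ∈ R_{m,n}`. -/
def coeffNorm2 (m n : ℕ) (p q : Polynomial ℂ) : ℝ :=
  (∑ j ∈ Finset.range (m + 1), ‖p.coeff j‖ ^ 2)
    + (∑ j ∈ Finset.range (n + 1), ‖q.coeff j‖ ^ 2)

/-- Chordal distance `χ(a/b, c/d)` between two points of the Riemann sphere given in
homogeneous coordinates: `|a d - c b| / (√(|a|²+|b|²) √(|c|²+|d|²))`. -/
def chord (a b c d : ℂ) : ℝ :=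
  ‖a * d - c * b‖ /
    (Real.sqrt (‖a‖ ^ 2 + ‖b‖ ^ 2) *
      Real.sqrt (‖c‖ ^ 2 + ‖d‖ ^ 2))

/-- Distance of the stacked coefficient vectors of `p/q` and of `a·(p̃/q̃)` (viewed in
`R_{m,n}`, i.e. in `ℂ^{m+n+2}`). -/
def coeffDist (m n : ℕ) (p q pt qt : Polynomial ℂ) (a : ℂ) : ℝ :=
  Real.sqrt ((∑ j ∈ Finset.range (m + 1), ‖p.coeff j - a * pt.coeff j‖ ^ 2)
    + (∑ j ∈ Finset.range (n + 1), ‖q.coeff j - a * qt.coeff j‖ ^ 2))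

/-! At a point `z` the chordal distance is at most `‖(p - p̃, q - q̃)(z)‖ / ‖(p, q)(z)‖`
(Cauchy–Schwarz), and for `|z| ≤ 1` the numerator is at most `√(m+n+1) d(r, r̃)`.
For the denominator, write `v = (1, z, …, z^(m+n))`; then
`vᵀ S = (q(z) (z^k)_{k ≤ m}, -p(z) (z^k)_{k ≤ n})`, so `‖vᵀ S‖ ≤ √(|p(z)|² + |q(z)|²) ‖v‖`.
Coprimality and nondegeneracy make `(a, b) ↦ a q - b p` onto the polynomials of degree
`≤ m + n`, i.e. `S` has full row rank, and `v = (vᵀ S) S†` gives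
`1 ≤ ‖S†‖ √(|p(z)|² + |q(z)|²)`. Finally `1 ≤ √2 ‖S‖`, because two columns of `S` are the
coefficient vectors of `p` and `q`, whose squared norms add up to `1`. -/

open scoped Matrix.Norms.L2Operator

theorem sq_norm_eval_le_of_norm_le_one {𝕜 : Type*} [NormedField 𝕜] {f : 𝕜[X]} {k : ℕ}
    (hf : f.natDegree ≤ k) {z : 𝕜} (hz : ‖z‖ ≤ 1) :
    ‖f.eval z‖ ^ 2 ≤ (k + 1) * ∑ j ∈ range (k + 1), ‖f.coeff j‖ ^ 2 := by
  have h_triangle : ‖f.eval z‖ ≤ ∑ j ∈ range (k + 1), ‖f.coeff j‖ := by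
    rw [eval_eq_sum_range' (Nat.lt_succ_of_le hf)]
    refine (norm_sum_le _ _).trans (sum_le_sum fun j _ => ?_)
    rw [norm_mul, norm_pow]
    exact mul_le_of_le_one_right (norm_nonneg _) (pow_le_one₀ (norm_nonneg z) hz)
  calc ‖f.eval z‖ ^ 2 ≤ (∑ j ∈ range (k + 1), ‖f.coeff j‖) ^ 2 := by gcongr
    _ ≤ _ := by simpa using sq_sum_le_card_mul_sum_sq (s := range (k + 1)) (f := (‖f.coeff ·‖))

theorem norm_mul_sub_mul_le (a b c d : ℂ) :
    ‖a * d - c * b‖ ≤ √(‖a - c‖ ^ 2 + ‖b - d‖ ^ 2) * √(‖c‖ ^ 2 + ‖d‖ ^ 2) := by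
  rw [← Real.sqrt_mul (by positivity), Real.le_sqrt (norm_nonneg _) (by positivity)]
  have h_triangle : ‖a * d - c * b‖ ≤ ‖a - c‖ * ‖d‖ + ‖c‖ * ‖b - d‖ := by
    rw [show a * d - c * b = (a - c) * d - c * (b - d) by ring, ← norm_mul, ← norm_mul]
    exact norm_sub_le _ _
  nlinarith [sq_nonneg (‖a - c‖ * ‖c‖ - ‖b - d‖ * ‖d‖), norm_nonneg (a * d - c * b),
    mul_nonneg (norm_nonneg (a - c)) (norm_nonneg d),
    mul_nonneg (norm_nonneg c) (norm_nonneg (b - d))]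

theorem chord_le_div (a b c d : ℂ) :
    chord a b c d ≤ √(‖a - c‖ ^ 2 + ‖b - d‖ ^ 2) / √(‖a‖ ^ 2 + ‖b‖ ^ 2) := by
  rw [chord, mul_comm (√_), ← div_div]
  gcongr
  rcases (Real.sqrt_nonneg (‖c‖ ^ 2 + ‖d‖ ^ 2)).eq_or_lt with h | h
  · rw [← h, div_zero]
    positivity
  · rw [div_le_iff₀ h]
    exact norm_mul_sub_mul_le a b c d

theorem exists_mul_add_mul_eq_of_isCoprime {K : Type*} [Field K] {u v f : K[X]} {m n : ℕ}
    (hco : IsCoprime u v) (hu : u.degree = m) (hv : v.natDegree ≤ n) (hf : f.natDegree ≤ m + n) :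
    ∃ a b : K[X], a.natDegree ≤ m ∧ b.natDegree ≤ n ∧ a * v + b * u = f := by
  obtain ⟨s, t, hst⟩ := hco
  have hu0 : u ≠ 0 := fun h => by simp [h] at hu
  -- reduce the Bézout solution `(f t, f s)` modulo `u`
  set a := f * t % u
  set b := f * s + f * t / u * v
  have ha : a.natDegree ≤ m :=
    natDegree_le_iff_degree_le.mpr ((hu ▸ degree_mod_lt _ hu0).le)
  have hab : a * v + b * u = f := by
    linear_combination f * hst + v * EuclideanDomain.mod_add_div (f * t) u
  refine ⟨a, b, ha, ?_, hab⟩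
  rcases eq_or_ne b 0 with hb | hb
  · simp [hb]
  have hbu : (b * u).natDegree ≤ m + n := by
    rw [show b * u = f - a * v by linear_combination hab]
    exact (natDegree_sub_le _ _).trans (max_le hf (natDegree_mul_le.trans (by omega)))
  rw [natDegree_mul hb hu0, natDegree_eq_of_degree_eq_some hu] at hbu
  omega

theorem sum_fin_ite_le_add_two {M : Type*} [AddCommMonoid M] (m n : ℕ) (f g : ℕ → M) :
    ∑ k : Fin (m + n + 2), (if (k : ℕ) ≤ m then f k else g (k - (m + 1)))
      = ∑ i ∈ range (m + 1), f i + ∑ i ∈ range (n + 1), g i := by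
  rw [Fin.sum_univ_eq_sum_range (fun k => if k ≤ m then f k else g (k - (m + 1))),
    show m + n + 2 = (m + 1) + (n + 1) by omega, sum_range_add]
  congr 1
  · exact sum_congr rfl fun i hi => if_pos (Nat.lt_succ_iff.mp (mem_range.mp hi))
  · exact sum_congr rfl fun i _ => by rw [if_neg (by omega), Nat.add_sub_cancel_left]

theorem coeff_mul_eq_sum_range {R : Type*} [CommSemiring R] {a : R[X]} {N : ℕ}
    (ha : a.natDegree < N) (q : R[X]) (j : ℕ) :
    (a * q).coeff j = ∑ i ∈ range N, a.coeff i * (X ^ i * q).coeff j := by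
  conv_lhs => rw [as_sum_range_C_mul_X_pow' a ha]
  simp only [sum_mul, finsetSum_coeff, mul_assoc, coeff_C_mul]

theorem sum_fin_pow_mul_coeff {R : Type*} [CommSemiring R] {r : R[X]} {N : ℕ}
    (hr : r.natDegree < N) (z : R) :
    ∑ j : Fin N, z ^ (j : ℕ) * r.coeff j = r.eval z := by
  rw [eval_eq_sum_range' hr, ← Fin.sum_univ_eq_sum_range (fun j => r.coeff j * z ^ j)]
  simp only [mul_comm]

open scoped ComplexOrder in
theorem isUnit_mul_conjTranspose_of_mulVec_surjective {𝕜 α β : Type*} [RCLike 𝕜] [Fintype α]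
    [Fintype β] [DecidableEq α] {A : Matrix α β 𝕜} (hA : Function.Surjective A.mulVec) :
    IsUnit (A * Aᴴ) := by
  obtain ⟨B, hB⟩ := mulVec_surjective_iff_exists_right_inverse.mp hA
  rw [← mulVec_injective_iff_isUnit]
  intro v w hvw
  have h_ker : Aᴴ *ᵥ (v - w) = 0 := by
    rw [← self_mul_conjTranspose_mulVec_eq_zero, mulVec_sub, hvw, sub_self]
  rw [← sub_eq_zero]
  calc v - w = (A * B)ᴴ *ᵥ (v - w) := by rw [hB, conjTranspose_one, one_mulVec]
    _ = 0 := by rw [conjTranspose_mul, ← mulVec_mulVec, h_ker, mulVec_zero]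

section SpecNorm

variable {α β : Type} [Fintype α] [Fintype β] [DecidableEq α] [DecidableEq β]

theorem specNorm_eq_norm (A : Matrix α β ℂ) : specNorm A = ‖A‖ := rfl

theorem specNorm_nonneg (A : Matrix α β ℂ) : 0 ≤ specNorm A := norm_nonneg _

theorem norm_col_le_specNorm (A : Matrix α β ℂ) (k : β) :
    ‖(WithLp.toLp 2 (A.col k) : EuclideanSpace ℂ α)‖ ≤ specNorm A := by
  simpa [mulVec_single_one, specNorm_eq_norm] using l2_opNorm_mulVec A (EuclideanSpace.single k 1)

theorem norm_vecMul_le_specNorm_mul (B : Matrix α β ℂ) (x : α → ℂ) :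
    ‖(WithLp.toLp 2 (x ᵥ* B) : EuclideanSpace ℂ β)‖
      ≤ specNorm B * ‖(WithLp.toLp 2 x : EuclideanSpace ℂ α)‖ := by
  have h_star : ∀ {γ : Type} [Fintype γ] (y : γ → ℂ),
      ‖(WithLp.toLp 2 (star y) : EuclideanSpace ℂ γ)‖
        = ‖(WithLp.toLp 2 y : EuclideanSpace ℂ γ)‖ := by
    intro γ _ y
    simp [EuclideanSpace.norm_eq]
  rw [← h_star, star_vecMul, ← h_star x, specNorm_eq_norm, ← l2_opNorm_conjTranspose]
  exact l2_opNorm_mulVec Bᴴ (WithLp.toLp 2 (star x))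

theorem norm_le_specNorm_pinv_mul {A : Matrix α β ℂ} (hA : IsUnit (A * Aᴴ)) (y : α → ℂ) :
    ‖(WithLp.toLp 2 y : EuclideanSpace ℂ α)‖
      ≤ specNorm (pinv A) * ‖(WithLp.toLp 2 (y ᵥ* A) : EuclideanSpace ℂ β)‖ := by
  have h_right_inv : A * pinv A = 1 := by
    rw [pinv, ← Matrix.mul_assoc, mul_nonsing_inv _ ((isUnit_iff_isUnit_det _).mp hA)]
  calc ‖(WithLp.toLp 2 y : EuclideanSpace ℂ α)‖
      = ‖(WithLp.toLp 2 ((y ᵥ* A) ᵥ* pinv A) : EuclideanSpace ℂ α)‖ := by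
        rw [vecMul_vecMul, h_right_inv, vecMul_one]
    _ ≤ _ := norm_vecMul_le_specNorm_mul _ _

end SpecNorm

def stackCoeffs (m n : ℕ) (a b : ℂ[X]) : Fin (m + n + 2) → ℂ :=
  fun k => if (k : ℕ) ≤ m then a.coeff k else b.coeff (k - (m + 1))

section Sylvester

variable {m n : ℕ} {p q : ℂ[X]}

theorem sylv_apply (j : Fin (m + n + 1)) (k : Fin (m + n + 2)) :
    sylv m n p q j k = if (k : ℕ) ≤ m then (X ^ (k : ℕ) * q).coeff j
      else -(X ^ ((k : ℕ) - (m + 1)) * p).coeff j := by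
  simp only [sylv, coeff_X_pow_mul']
  split_ifs <;> simp

theorem sylv_mulVec_stackCoeffs {a b : ℂ[X]} (ha : a.natDegree ≤ m) (hb : b.natDegree ≤ n) :
    sylv m n p q *ᵥ stackCoeffs m n a b = fun j : Fin (m + n + 1) => (a * q - b * p).coeff j := by
  ext j
  have h_entry : ∀ k : Fin (m + n + 2), sylv m n p q j k * stackCoeffs m n a b k =
      if (k : ℕ) ≤ m then a.coeff k * (X ^ (k : ℕ) * q).coeff j
      else -(b.coeff (k - (m + 1)) * (X ^ ((k : ℕ) - (m + 1)) * p).coeff j) := by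
    intro k
    rw [sylv_apply, stackCoeffs]
    split_ifs <;> ring
  rw [mulVec, dotProduct, sum_congr rfl fun k _ => h_entry k]
  refine (sum_fin_ite_le_add_two m n (fun i => a.coeff i * (X ^ i * q).coeff j)
    (fun i => -(b.coeff i * (X ^ i * p).coeff j))).trans ?_
  rw [coeff_sub, coeff_mul_eq_sum_range (Nat.lt_succ_of_le ha),
    coeff_mul_eq_sum_range (Nat.lt_succ_of_le hb), sum_neg_distrib, sub_eq_add_neg]

theorem sylv_mulVec_surjective (hp : p.natDegree ≤ m) (hq : q.natDegree ≤ n)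
    (hco : IsCoprime p q) (hlead : p.coeff m ≠ 0 ∨ q.coeff n ≠ 0) :
    Function.Surjective (sylv m n p q).mulVec := by
  intro y
  set f : ℂ[X] := ∑ j : Fin (m + n + 1), C (y j) * X ^ (j : ℕ)
  have hf : f.natDegree ≤ m + n :=
    natDegree_sum_le_of_forall_le _ _ fun j _ => (natDegree_C_mul_X_pow_le _ _).trans (by omega)
  have hfy : (fun j : Fin (m + n + 1) => f.coeff j) = y := by
    ext j
    simp [f, finsetSum_coeff, coeff_X_pow, Fin.val_inj]
  obtain ⟨a, b, ha, hb, hab⟩ :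
      ∃ a b : ℂ[X], a.natDegree ≤ m ∧ b.natDegree ≤ n ∧ a * q - b * p = f := by
    rcases hlead with hpm | hqn
    · obtain ⟨a, b, ha, hb, hab⟩ := exists_mul_add_mul_eq_of_isCoprime hco
        (degree_eq_of_le_of_coeff_ne_zero (natDegree_le_iff_degree_le.mp hp) hpm) hq hf
      exact ⟨a, -b, ha, by rwa [natDegree_neg], by rw [← hab]; ring⟩
    · obtain ⟨a, b, ha, hb, hab⟩ := exists_mul_add_mul_eq_of_isCoprime hco.symm
        (degree_eq_of_le_of_coeff_ne_zero (natDegree_le_iff_degree_le.mp hq) hqn) hp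
        (by omega : f.natDegree ≤ n + m)
      exact ⟨b, -a, hb, by rwa [natDegree_neg], by rw [← hab]; ring⟩
  exact ⟨stackCoeffs m n a b, by rw [sylv_mulVec_stackCoeffs ha hb, hab, hfy]⟩

theorem powers_vecMul_sylv (hp : p.natDegree ≤ m) (hq : q.natDegree ≤ n) (z : ℂ) :
    (fun j : Fin (m + n + 1) => z ^ (j : ℕ)) ᵥ* sylv m n p q =
      fun k : Fin (m + n + 2) => if (k : ℕ) ≤ m then z ^ (k : ℕ) * q.eval z
        else -(z ^ ((k : ℕ) - (m + 1)) * p.eval z) := by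
  have hdeg : ∀ {r : ℂ[X]} {i d : ℕ}, r.natDegree ≤ d → i + d ≤ m + n →
      (X ^ i * r).natDegree < m + n + 1 := fun hr hid =>
    Nat.lt_succ_of_le (natDegree_mul_le.trans ((add_le_add (natDegree_X_pow_le _) hr).trans hid))
  ext k
  simp only [vecMul, dotProduct, sylv_apply]
  split_ifs with hk
  · rw [sum_fin_pow_mul_coeff (hdeg hq (by omega)), eval_mul, eval_X_pow]
  · simp only [mul_neg, sum_neg_distrib]
    rw [sum_fin_pow_mul_coeff (hdeg hp (by omega)), eval_mul, eval_X_pow]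

theorem norm_powers_vecMul_sylv_le (hp : p.natDegree ≤ m) (hq : q.natDegree ≤ n) (z : ℂ) :
    ‖(WithLp.toLp 2 ((fun j : Fin (m + n + 1) => z ^ (j : ℕ)) ᵥ* sylv m n p q) :
        EuclideanSpace ℂ (Fin (m + n + 2)))‖
      ≤ √(‖p.eval z‖ ^ 2 + ‖q.eval z‖ ^ 2) *
        ‖(WithLp.toLp 2 (fun j : Fin (m + n + 1) => z ^ (j : ℕ)) :
          EuclideanSpace ℂ (Fin (m + n + 1)))‖ := by
  set G : ℕ → ℝ := fun N => ∑ i ∈ range N, ‖z‖ ^ (2 * i)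
  have hG_mono : ∀ {N N'}, N ≤ N' → G N ≤ G N' := fun h =>
    sum_le_sum_of_subset_of_nonneg (range_subset_range.mpr h) fun _ _ _ => by positivity
  rw [← pow_le_pow_iff_left₀ (norm_nonneg _) (by positivity) two_ne_zero, mul_pow,
    Real.sq_sqrt (by positivity), EuclideanSpace.norm_sq_eq, EuclideanSpace.norm_sq_eq,
    powers_vecMul_sylv hp hq]
  have h_lhs : ∑ k : Fin (m + n + 2), ‖(if (k : ℕ) ≤ m then z ^ (k : ℕ) * q.eval z
      else -(z ^ ((k : ℕ) - (m + 1)) * p.eval z))‖ ^ 2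
        = ‖q.eval z‖ ^ 2 * G (m + 1) + ‖p.eval z‖ ^ 2 * G (n + 1) := by
    refine ((sum_congr rfl fun k _ => ?_).trans (sum_fin_ite_le_add_two m n
      (fun i => ‖q.eval z‖ ^ 2 * ‖z‖ ^ (2 * i)) (fun i => ‖p.eval z‖ ^ 2 * ‖z‖ ^ (2 * i)))).trans ?_
    · split_ifs <;> simp only [norm_neg, norm_mul, norm_pow, mul_pow, ← pow_mul] <;> ring
    · simp only [G, mul_sum]
  have h_rhs : ∑ j : Fin (m + n + 1), ‖z ^ (j : ℕ)‖ ^ 2 = G (m + n + 1) := by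
    rw [Fin.sum_univ_eq_sum_range (fun j => ‖z ^ j‖ ^ 2)]
    simp only [G, norm_pow, ← pow_mul, mul_comm]
  rw [h_lhs, h_rhs]
  have hG : 0 ≤ G (m + n + 1) := sum_nonneg fun _ _ => by positivity
  nlinarith [hG_mono (show m + 1 ≤ m + n + 1 by omega), hG_mono (show n + 1 ≤ m + n + 1 by omega),
    sq_nonneg ‖p.eval z‖, sq_nonneg ‖q.eval z‖]

theorem one_le_specNorm_pinv_sylv_mul (hp : p.natDegree ≤ m) (hq : q.natDegree ≤ n)
    (hco : IsCoprime p q) (hlead : p.coeff m ≠ 0 ∨ q.coeff n ≠ 0) (z : ℂ) :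
    1 ≤ specNorm (pinv (sylv m n p q)) * √(‖p.eval z‖ ^ 2 + ‖q.eval z‖ ^ 2) := by
  set v : Fin (m + n + 1) → ℂ := fun j => z ^ (j : ℕ)
  have hv : 0 < ‖(WithLp.toLp 2 v : EuclideanSpace ℂ (Fin (m + n + 1)))‖ :=
    norm_pos_iff.mpr fun h => by simpa [v] using congrFun (congrArg WithLp.ofLp h) 0
  have h_pinv := norm_le_specNorm_pinv_mul
    (isUnit_mul_conjTranspose_of_mulVec_surjective (sylv_mulVec_surjective hp hq hco hlead)) v
  have h_vandermonde := norm_powers_vecMul_sylv_le hp hq z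
  rw [← le_mul_iff_one_le_left hv, mul_assoc]
  exact h_pinv.trans (mul_le_mul_of_nonneg_left h_vandermonde (specNorm_nonneg _))

theorem sq_norm_toLp_coeff {r : ℂ[X]} {k N : ℕ} (hr : r.natDegree ≤ k) (hkN : k < N) :
    ‖(WithLp.toLp 2 (fun j : Fin N => r.coeff j) : EuclideanSpace ℂ (Fin N))‖ ^ 2
      = ∑ j ∈ range (k + 1), ‖r.coeff j‖ ^ 2 := by
  rw [EuclideanSpace.norm_sq_eq, Fin.sum_univ_eq_sum_range (fun j => ‖r.coeff j‖ ^ 2)]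
  refine (sum_subset (range_subset_range.mpr hkN) fun i _ hi => ?_).symm
  rw [coeff_eq_zero_of_natDegree_lt (by rw [mem_range] at hi; omega), norm_zero,
    zero_pow two_ne_zero]

theorem sum_sq_norm_coeff_le_sq_specNorm_sylv (hp : p.natDegree ≤ m) (hq : q.natDegree ≤ n) :
    ∑ j ∈ range (m + 1), ‖p.coeff j‖ ^ 2 ≤ specNorm (sylv m n p q) ^ 2 ∧
      ∑ j ∈ range (n + 1), ‖q.coeff j‖ ^ 2 ≤ specNorm (sylv m n p q) ^ 2 := by
  have hcol_p : (sylv m n p q).col ⟨m + 1, by omega⟩ = fun j : Fin (m + n + 1) => (-p).coeff j := by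
    ext j
    simp [sylv_apply]
  have hcol_q : (sylv m n p q).col 0 = fun j : Fin (m + n + 1) => q.coeff j := by
    ext j
    simp [sylv_apply]
  have h_p := norm_col_le_specNorm (sylv m n p q) ⟨m + 1, by omega⟩
  have h_q := norm_col_le_specNorm (sylv m n p q) 0
  rw [hcol_p] at h_p
  rw [hcol_q] at h_q
  constructor
  · calc ∑ j ∈ range (m + 1), ‖p.coeff j‖ ^ 2
        = ‖(WithLp.toLp 2 (fun j : Fin (m + n + 1) => (-p).coeff j) :
            EuclideanSpace ℂ (Fin (m + n + 1)))‖ ^ 2 := by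
          rw [sq_norm_toLp_coeff (k := m) (by rwa [natDegree_neg]) (by omega)]
          simp
      _ ≤ _ := pow_le_pow_left₀ (norm_nonneg _) h_p 2
  · rw [← sq_norm_toLp_coeff hq (by omega : n < m + n + 1)]
    exact pow_le_pow_left₀ (norm_nonneg _) h_q 2

theorem one_le_sqrt_two_mul_specNorm_sylv (hp : p.natDegree ≤ m) (hq : q.natDegree ≤ n)
    (hnorm : coeffNorm2 m n p q = 1) : 1 ≤ √2 * specNorm (sylv m n p q) := by
  obtain ⟨hP, hQ⟩ := sum_sq_norm_coeff_le_sq_specNorm_sylv hp hq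
  rw [coeffNorm2] at hnorm
  calc (1 : ℝ) = √1 := Real.sqrt_one.symm
    _ ≤ √(2 * specNorm (sylv m n p q) ^ 2) := Real.sqrt_le_sqrt (by linarith)
    _ = √2 * specNorm (sylv m n p q) := by
      rw [Real.sqrt_mul zero_le_two, Real.sqrt_sq (specNorm_nonneg _)]

end Sylvester

theorem sqrt_sq_norm_eval_sub_le_coeffDist {m n : ℕ} {p q pt qt : ℂ[X]}
    (hp : p.natDegree ≤ m) (hq : q.natDegree ≤ n) (hpt : pt.natDegree ≤ m)
    (hqt : qt.natDegree ≤ n) {z : ℂ} (hz : ‖z‖ ≤ 1) :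
    √(‖p.eval z - pt.eval z‖ ^ 2 + ‖q.eval z - qt.eval z‖ ^ 2)
      ≤ √(m + n + 1 : ℝ) * coeffDist m n p q pt qt 1 := by
  rw [coeffDist, ← Real.sqrt_mul (by positivity)]
  refine Real.sqrt_le_sqrt ?_
  have hP := sq_norm_eval_le_of_norm_le_one ((natDegree_sub_le p pt).trans (max_le hp hpt)) hz
  have hQ := sq_norm_eval_le_of_norm_le_one ((natDegree_sub_le q qt).trans (max_le hq hqt)) hz
  simp only [eval_sub, coeff_sub, one_mul] at hP hQ ⊢
  have hP0 : 0 ≤ ∑ j ∈ range (m + 1), ‖p.coeff j - pt.coeff j‖ ^ 2 := by positivity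
  have hQ0 : 0 ≤ ∑ j ∈ range (n + 1), ‖q.coeff j - qt.coeff j‖ ^ 2 := by positivity
  nlinarith [mul_nonneg (Nat.cast_nonneg n : (0 : ℝ) ≤ n) hP0,
    mul_nonneg (Nat.cast_nonneg m : (0 : ℝ) ≤ m) hQ0]

theorem chordal_le_coeff_distance_general (m n : ℕ) (p q pt qt : Polynomial ℂ)
    (hp : p.natDegree ≤ m) (hq : q.natDegree ≤ n)
    (hpt : pt.natDegree ≤ m) (hqt : qt.natDegree ≤ n)
    (hco : IsCoprime p q) (hlead : p.coeff m ≠ 0 ∨ q.coeff n ≠ 0)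
    (hnorm : coeffNorm2 m n p q = 1)
    (z : ℂ) (hz : ‖z‖ ≤ 1) :
    chord (p.eval z) (q.eval z) (pt.eval z) (qt.eval z) ≤
      Real.sqrt (2 * (m + n + 1)) * condS m n p q * coeffDist m n p q pt qt 1 := by
  have h_pinv := one_le_specNorm_pinv_sylv_mul hp hq hco hlead z
  have h_eval_pos : 0 < √(‖p.eval z‖ ^ 2 + ‖q.eval z‖ ^ 2) :=
    pos_of_mul_pos_right (one_pos.trans_le h_pinv) (specNorm_nonneg _)
  calc chord (p.eval z) (q.eval z) (pt.eval z) (qt.eval z)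
      ≤ √(‖p.eval z - pt.eval z‖ ^ 2 + ‖q.eval z - qt.eval z‖ ^ 2)
          / √(‖p.eval z‖ ^ 2 + ‖q.eval z‖ ^ 2) := chord_le_div _ _ _ _
    _ ≤ √(‖p.eval z - pt.eval z‖ ^ 2 + ‖q.eval z - qt.eval z‖ ^ 2)
          * specNorm (pinv (sylv m n p q)) := by
      rw [div_le_iff₀ h_eval_pos, mul_assoc]
      exact le_mul_of_one_le_right (Real.sqrt_nonneg _) h_pinv
    _ ≤ √(m + n + 1 : ℝ) * coeffDist m n p q pt qt 1 * specNorm (pinv (sylv m n p q)) :=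
      mul_le_mul_of_nonneg_right (sqrt_sq_norm_eval_sub_le_coeffDist hp hq hpt hqt hz)
        (specNorm_nonneg _)
    _ ≤ √(m + n + 1 : ℝ) * coeffDist m n p q pt qt 1 * specNorm (pinv (sylv m n p q))
          * (√2 * specNorm (sylv m n p q)) :=
      le_mul_of_one_le_right (mul_nonneg (mul_nonneg (Real.sqrt_nonneg _) (Real.sqrt_nonneg _))
        (specNorm_nonneg _))
        (one_le_sqrt_two_mul_specNorm_sylv hp hq hnorm)
    _ = _ := by
      rw [condS, Real.sqrt_mul zero_le_two]
      ring

/-- for `r = p/q` nondegenerate and `r̃ = p̃/q̃` in `R_{m,n}`, both with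
unit-norm coefficient vectors in optimal relative phase, for all `|z| ≤ 1` one has
`χ(r(z), r̃(z)) ≤ √(2(m+n+1)) κ(S) d(r, r̃)`. -/
theorem chordal_le_coeff_distance (m n : ℕ) (p q pt qt : Polynomial ℂ)
    (hp : p.natDegree ≤ m) (hq : q.natDegree ≤ n)
    (hpt : pt.natDegree ≤ m) (hqt : qt.natDegree ≤ n)
    (hco : IsCoprime p q) (hlead : p.coeff m ≠ 0 ∨ q.coeff n ≠ 0)
    (hnorm : coeffNorm2 m n p q = 1) (hnormt : coeffNorm2 m n pt qt = 1)
    (hopt : ∀ a : ℂ, ‖a‖ = 1 →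
      coeffDist m n p q pt qt 1 ≤ coeffDist m n p q pt qt a)
    (z : ℂ) (hz : ‖z‖ ≤ 1) :
    chord (p.eval z) (q.eval z) (pt.eval z) (qt.eval z) ≤
      Real.sqrt (2 * (m + n + 1)) * condS m n p q * coeffDist m n p q pt qt 1 :=
  chordal_le_coeff_distance_general m n p q pt qt hp hq hpt hqt hco hlead hnorm z hz
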